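/- arXiv:1503.06376 — 2 statements merged into one kernel-verified Lean document; each statement's English description precedes it below -/
import Mathlib

section
/- For any real number v, the principal value integral (1/π) ∫_{-∞}^{∞} (1 - cos(u v))/u² du equals |v|. -/
/-!
Writing `1 / u ^ 2 = ∫ t in Ioi 0, t * exp (-(u * t))` and exchanging the order of integration
(Tonelli: the integrand is nonnegative) turns `∫ u in Ioi 0, (1 - cos u) / u ^ 2` into
`∫ t in Ioi 0, t * L t`, where `L t = 1 / t - t / (t ^ 2 + 1)` is the Laplace transform of
`1 - cos`. Since `t * L t = 1 / (1 + t ^ 2)`, the half-line integral is `π / 2`; evenness gives `π`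
on the whole line, and the substitution `u ↦ u * v` produces the factor `|v|`.
-/

open MeasureTheory Real Set

theorem integral_integral_swap_of_nonneg {α β : Type*} [MeasurableSpace α] [MeasurableSpace β]
    {μ : Measure α} {ν : Measure β} [SFinite μ] [SFinite ν] {f : α → β → ℝ}
    (hf : AEStronglyMeasurable (Function.uncurry f) (μ.prod ν))
    (hf_nonneg : ∀ᵐ y ∂ν, ∀ᵐ x ∂μ, 0 ≤ f x y)
    (hf_sec : ∀ᵐ y ∂ν, Integrable (f · y) μ)
    (hf_int : Integrable (fun y => ∫ x, f x y ∂μ) ν) :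
    ∫ x, ∫ y, f x y ∂ν ∂μ = ∫ y, ∫ x, f x y ∂μ ∂ν := by
  refine integral_integral_swap ((integrable_prod_iff' hf).2 ⟨hf_sec, hf_int.congr ?_⟩)
  filter_upwards [hf_nonneg] with y hy
  exact integral_congr_ae (hy.mono fun x hx => (Real.norm_of_nonneg hx).symm)

theorem integral_exp_neg_mul_Ioi {r : ℝ} (hr : 0 < r) :
    ∫ u in Ioi 0, exp (-(r * u)) = r⁻¹ := by
  simpa [Real.Gamma_one] using integral_rpow_mul_exp_neg_mul_Ioi one_pos hr

theorem integral_mul_exp_neg_mul_Ioi {r : ℝ} (hr : 0 < r) :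
    ∫ t in Ioi 0, t * exp (-(r * t)) = (r ^ 2)⁻¹ := by
  have h := integral_rpow_mul_exp_neg_mul_Ioi two_pos hr
  norm_num [Real.Gamma_two] at h
  exact h

theorem integral_exp_neg_mul_mul_cos_Ioi {t : ℝ} (ht : 0 < t) :
    ∫ u in Ioi 0, exp (-(t * u)) * cos u = t / (t ^ 2 + 1) := by
  have ha : (-t + Complex.I).re < 0 := by simpa using ht
  have h := congrArg Complex.re (integral_exp_mul_complex_Ioi ha 0)
  rw [← RCLike.re_to_complex, ← integral_re (integrableOn_exp_mul_complex_Ioi ha 0)] at h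
  simpa [Complex.exp_re, Complex.div_re, Complex.normSq, sq] using h

theorem integral_exp_neg_mul_mul_one_sub_cos_Ioi {t : ℝ} (ht : 0 < t) :
    ∫ u in Ioi 0, exp (-(t * u)) * (1 - cos u) = t⁻¹ - t / (t ^ 2 + 1) := by
  have h_exp := integral_exp_neg_mul_Ioi ht
  have h_cos := integral_exp_neg_mul_mul_cos_Ioi ht
  simp_rw [mul_one_sub]
  rw [integral_sub (.of_integral_ne_zero (by rw [h_exp]; positivity))
    (.of_integral_ne_zero (by rw [h_cos]; positivity)), h_exp, h_cos]

theorem integral_one_sub_cos_div_sq_Ioi : ∫ u in Ioi 0, (1 - cos u) / u ^ 2 = π / 2 := by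
  set F : ℝ → ℝ → ℝ := fun u t => (1 - cos u) * (t * exp (-(u * t))) with hF
  have integral_F_dt : ∀ u ∈ Ioi (0 : ℝ), ∫ t in Ioi 0, F u t = (1 - cos u) / u ^ 2 := by
    intro u hu
    rw [integral_const_mul, integral_mul_exp_neg_mul_Ioi hu, div_eq_mul_inv]
  have integral_F_du : ∀ t ∈ Ioi (0 : ℝ), ∫ u in Ioi 0, F u t = (1 + t ^ 2)⁻¹ := by
    intro t (ht : 0 < t)
    calc ∫ u in Ioi 0, F u t = t * ∫ u in Ioi 0, exp (-(t * u)) * (1 - cos u) := by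
          rw [← integral_const_mul]; congr with u; simp only [hF, mul_comm u t]; ring
      _ = (1 + t ^ 2)⁻¹ := by
          rw [integral_exp_neg_mul_mul_one_sub_cos_Ioi ht]; field_simp; ring
  have hF_swap : ∫ u in Ioi 0, ∫ t in Ioi 0, F u t = ∫ t in Ioi 0, ∫ u in Ioi 0, F u t := by
    refine integral_integral_swap_of_nonneg (by fun_prop) ?_ ?_ ?_
    · filter_upwards [ae_restrict_mem measurableSet_Ioi] with t ht
      exact .of_forall fun u => mul_nonneg (by linarith [cos_le_one u]) (by positivity [ht.out])
    · filter_upwards [ae_restrict_mem measurableSet_Ioi] with t ht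
      exact .of_integral_ne_zero (by rw [integral_F_du t ht]; positivity)
    · exact integrable_inv_one_add_sq.integrableOn.congr_fun
        (fun t ht => (integral_F_du t ht).symm) measurableSet_Ioi
  rw [← setIntegral_congr_fun measurableSet_Ioi integral_F_dt, hF_swap,
    setIntegral_congr_fun measurableSet_Ioi integral_F_du, integral_Ioi_inv_one_add_sq]
  simp

theorem integral_one_sub_cos_div_sq : ∫ u : ℝ, (1 - cos u) / u ^ 2 = π := by
  have h := integral_comp_abs (f := fun u : ℝ => (1 - cos u) / u ^ 2)
  simp only [cos_abs, sq_abs] at h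
  rw [h, integral_one_sub_cos_div_sq_Ioi]
  ring

theorem integral_one_sub_cos_mul_div_sq (v : ℝ) :
    ∫ u : ℝ, (1 - cos (u * v)) / u ^ 2 = π * |v| := by
  rcases eq_or_ne v 0 with rfl | hv
  · simp
  have h_scale : ∀ u : ℝ,
      (1 - cos (u * v)) / u ^ 2 = v ^ 2 * ((1 - cos (u * v)) / (u * v) ^ 2) := by
    intro u
    rcases eq_or_ne u 0 with rfl | hu
    · simp
    · field_simp
  simp_rw [h_scale]
  rw [integral_const_mul, Measure.integral_comp_mul_right (fun w => (1 - cos w) / w ^ 2),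
    integral_one_sub_cos_div_sq, smul_eq_mul, abs_inv, ← sq_abs]
  field_simp

theorem kac_pv_integral (v : ℝ) :
    (1 / π) * ∫ u : ℝ, (1 - Real.cos (u * v)) / u ^ 2 = |v| := by
  rw [integral_one_sub_cos_mul_div_sq]
  field_simp
end

section
/- For h > 0 and real t, ∫_{-∞}^{∞} (e^{tu} - 1 - tu) e^{-h u²/2} / u² du = Σ_{m=1}^{∞} √(2πh)/(m!(2m-1)) · (t²/(2h))^m. -/
/-!
Away from `u = 0`, `(exp (t u) - 1 - t u) / u ^ 2 = ∑ₙ tⁿ⁺² uⁿ / (n + 2)!`. Since `n! ≤ (n + 2)!`,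
the terms are dominated by those of `t² exp |t u|`, which is integrable against the Gaussian, so
the series may be integrated termwise. Odd Gaussian moments vanish and the even ones are
`∫ u ^ (2k) exp (-b u²) = Γ(k + 1/2) / b ^ (k + 1/2) = √(π / b) (2k)! / ((4b)ᵏ k!)`; with `b = h / 2`
this gives the stated coefficients.
-/

open MeasureTheory Real
open scoped Nat

theorem Real.hasSum_pow_div_factorial (x : ℝ) : HasSum (fun n : ℕ => x ^ n / n !) (exp x) :=
  Real.exp_eq_exp_ℝ ▸ NormedSpace.expSeries_div_hasSum_exp x

theorem Real.hasSum_exp_sub_one_sub (x : ℝ) :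
    HasSum (fun n : ℕ => x ^ (n + 2) / (n + 2)!) (exp x - 1 - x) := by
  simpa [Finset.sum_range_succ, sub_sub] using
    (hasSum_nat_add_iff' 2).mpr (Real.hasSum_pow_div_factorial x)

theorem Real.Gamma_nat_add_half_eq_factorial (k : ℕ) :
    Gamma (k + 1 / 2) = √π * (2 * k)! / (4 ^ k * k !) := by
  rw [Gamma_nat_add_half]
  rcases k with _ | k
  · simp
  · rw [show 2 * (k + 1) - 1 = 2 * k + 1 by omega, show 2 * (k + 1) = 2 * k + 1 + 1 by ring,
      Nat.factorial_eq_mul_doubleFactorial, show 2 * k + 1 + 1 = 2 * (k + 1) by ring,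
      Nat.doubleFactorial_two_mul]
    push_cast
    field_simp
    rw [← pow_mul, mul_comm, pow_mul]
    norm_num

section GaussianMoments

variable {b : ℝ}

theorem integrable_pow_mul_exp_neg_mul_sq (hb : 0 < b) (n : ℕ) :
    Integrable fun u : ℝ => u ^ n * exp (-b * u ^ 2) := by
  simpa using integrable_rpow_mul_exp_neg_mul_sq hb (s := n) (by linarith [n.cast_nonneg (α := ℝ)])

theorem integrable_exp_mul_mul_exp_neg_mul_sq (hb : 0 < b) (c : ℝ) :
    Integrable fun u : ℝ => exp (c * u) * exp (-b * u ^ 2) := by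
  -- complete the square: `c u - b u² = c² / (4b) - b (u - c / (2b))²`
  refine (((integrable_exp_neg_mul_sq hb).comp_sub_right (c / (2 * b))).const_mul
    (exp (c ^ 2 / (4 * b)))).congr (.of_forall fun u => ?_)
  simp only [← exp_add]
  congr 1
  field_simp
  ring

theorem integrable_exp_abs_mul_mul_exp_neg_mul_sq (hb : 0 < b) (c : ℝ) :
    Integrable fun u : ℝ => exp |c * u| * exp (-b * u ^ 2) := by
  refine ((integrable_exp_mul_mul_exp_neg_mul_sq hb c).add
    (integrable_exp_mul_mul_exp_neg_mul_sq hb (-c))).mono' (by fun_prop) (.of_forall fun u => ?_)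
  rw [Pi.add_apply, norm_of_nonneg (by positivity), ← add_mul]
  gcongr
  simpa only [neg_mul] using exp_abs_le (c * u)

theorem integral_odd_pow_mul_exp_neg_mul_sq (b : ℝ) (k : ℕ) :
    ∫ u : ℝ, u ^ (2 * k + 1) * exp (-b * u ^ 2) = 0 := by
  have h := integral_neg_eq_self (fun u : ℝ => u ^ (2 * k + 1) * exp (-b * u ^ 2)) volume
  simp only [Odd.neg_pow (odd_two_mul_add_one k), neg_sq, neg_mul, integral_neg] at h ⊢
  linarith

theorem integral_even_pow_mul_exp_neg_mul_sq (hb : 0 < b) (k : ℕ) :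
    ∫ u : ℝ, u ^ (2 * k) * exp (-b * u ^ 2) = √(π / b) * (2 * k)! / ((4 * b) ^ k * k !) := by
  have h_half : ∫ u : ℝ, u ^ (2 * k) * exp (-b * u ^ 2)
      = 2 * ∫ u in Set.Ioi (0 : ℝ), u ^ (2 * k) * exp (-b * u ^ 2) := by
    rw [← integral_comp_abs (f := fun u : ℝ => u ^ (2 * k) * exp (-b * u ^ 2))]
    simp only [pow_mul, sq_abs]
  have h_Ioi := integral_rpow_mul_exp_neg_mul_rpow two_pos
    (neg_one_lt_zero.trans_le (Nat.cast_nonneg (2 * k))) hb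
  simp only [Real.rpow_natCast, Real.rpow_two] at h_Ioi
  have h_arg : (((2 * k : ℕ) : ℝ) + 1) / 2 = k + 1 / 2 := by push_cast; ring
  have h_pow : b ^ (-(((2 * k : ℕ) : ℝ) + 1) / 2) = (b ^ k)⁻¹ * (√b)⁻¹ := by
    rw [show -(((2 * k : ℕ) : ℝ) + 1) / 2 = -(k : ℝ) + -(1 / 2) by push_cast; ring,
      Real.rpow_add hb, Real.rpow_neg hb.le, Real.rpow_neg hb.le, Real.rpow_natCast,
      ← Real.sqrt_eq_rpow]
  rw [h_half, h_Ioi, h_pow, h_arg, Gamma_nat_add_half_eq_factorial, Real.sqrt_div' _ hb.le]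
  field_simp
  ring

theorem hasSum_integral_exp_sub_one_sub_mul_div_sq (hb : 0 < b) (t : ℝ) :
    HasSum (fun n : ℕ => t ^ (n + 2) / (n + 2)! * ∫ u : ℝ, u ^ n * exp (-b * u ^ 2))
      (∫ u : ℝ, (exp (t * u) - 1 - t * u) * exp (-b * u ^ 2) / u ^ 2) := by
  simp only [← integral_const_mul]
  refine hasSum_integral_of_dominated_convergence
    (fun n u => t ^ 2 * (|t * u| ^ n / n ! * exp (-b * u ^ 2)))
    (fun n => ((integrable_pow_mul_exp_neg_mul_sq hb n).const_mul _).aestronglyMeasurable)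
    (fun n => .of_forall fun u => ?_) (.of_forall fun u => ?_) ?_ ?_
  · have h_norm : ‖t ^ (n + 2) / (n + 2)! * (u ^ n * exp (-b * u ^ 2))‖
        = t ^ 2 * (|t * u| ^ n / (n + 2)! * exp (-b * u ^ 2)) := by
      simp only [norm_mul, norm_div, norm_pow, Real.norm_eq_abs, Nat.abs_cast,
        abs_of_pos (exp_pos _), abs_mul, mul_pow, pow_add, sq_abs]
      ring
    rw [h_norm]
    gcongr
    omega
  · exact (((Real.hasSum_pow_div_factorial |t * u|).mul_right _).mul_left _).summable
  · have h_tsum (u : ℝ) : ∑' n, t ^ 2 * (|t * u| ^ n / n ! * exp (-b * u ^ 2))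
        = t ^ 2 * (exp |t * u| * exp (-b * u ^ 2)) :=
      (((Real.hasSum_pow_div_factorial |t * u|).mul_right _).mul_left _).tsum_eq
    simpa only [h_tsum] using (integrable_exp_abs_mul_mul_exp_neg_mul_sq hb t).const_mul (t ^ 2)
  · filter_upwards [compl_mem_ae_iff.mpr (measure_singleton (0 : ℝ))] with u (hu : u ≠ 0)
    have h_term (n : ℕ) : (t * u) ^ (n + 2) / (n + 2)! * (exp (-b * u ^ 2) / u ^ 2)
        = t ^ (n + 2) / (n + 2)! * (u ^ n * exp (-b * u ^ 2)) := by
      field_simp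
      ring
    have h := (Real.hasSum_exp_sub_one_sub (t * u)).mul_right (exp (-b * u ^ 2) / u ^ 2)
    simp only [h_term] at h
    rwa [mul_div_assoc'] at h

theorem hasSum_even_integral_exp_sub_one_sub_mul_div_sq (hb : 0 < b) (t : ℝ) :
    HasSum
      (fun k : ℕ => t ^ (2 * k + 2) / (2 * k + 2)! * (√(π / b) * (2 * k)! / ((4 * b) ^ k * k !)))
      (∫ u : ℝ, (exp (t * u) - 1 - t * u) * exp (-b * u ^ 2) / u ^ 2) := by
  have h_odd : ∀ n ∉ Set.range (2 * ·),
      t ^ (n + 2) / (n + 2)! * ∫ u : ℝ, u ^ n * exp (-b * u ^ 2) = 0 := by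
    intro n hn
    obtain ⟨k, rfl⟩ : Odd n := Nat.not_even_iff_odd.mp fun ⟨k, hk⟩ => hn ⟨k, by dsimp only; omega⟩
    rw [integral_odd_pow_mul_exp_neg_mul_sq, mul_zero]
  have h := hasSum_integral_exp_sub_one_sub_mul_div_sq hb t
  rw [← (mul_right_injective₀ two_ne_zero).hasSum_iff h_odd] at h
  simpa only [Function.comp_def, integral_even_pow_mul_exp_neg_mul_sq hb] using h

end GaussianMoments

theorem exp_series_gaussian_integral (h t : ℝ) (hh : 0 < h) :
    ∫ u : ℝ, (Real.exp (t * u) - 1 - t * u) * Real.exp (-h * u ^ 2 / 2) / u ^ 2 =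
      ∑' m : ℕ,
        Real.sqrt (2 * π * h) / (((m + 1).factorial : ℝ) * (2 * (m + 1) - 1)) *
          (t ^ 2 / (2 * h)) ^ (m + 1) := by
  have h_series := hasSum_even_integral_exp_sub_one_sub_mul_div_sq (half_pos hh) t
  simp only [show ∀ u : ℝ, -h * u ^ 2 / 2 = -(h / 2) * u ^ 2 by intro u; ring]
  rw [← h_series.tsum_eq]
  refine tsum_congr fun m => ?_
  have h_sqrt : √(π / (h / 2)) = √(2 * π * h) / h := by
    rw [show 2 * π * h = π / (h / 2) * h ^ 2 by field_simp, Real.sqrt_mul' _ (sq_nonneg h),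
      Real.sqrt_sq hh.le]
    field_simp
  have h_fact : ((2 * m + 2)! : ℝ) = (2 * m + 2) * (2 * m + 1) * (2 * m)! := by
    push_cast [Nat.factorial_succ]
    ring
  rw [h_sqrt, h_fact, Nat.factorial_succ, show 4 * (h / 2) = 2 * h by ring, div_pow, ← pow_mul,
    mul_pow]
  push_cast
  rw [show 2 * ((m : ℝ) + 1) - 1 = 2 * m + 1 by ring]
  field_simp
  ring
end
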